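/- arXiv:1210.4542 — 3 statements merged into one kernel-verified Lean document; each statement's English description precedes it below -/
import Mathlib

section
/- Let V be a symmetric monoidal closed category and m : B₁ ⟶ B₂ a morphism of V. Then m is a strong monomorphism if and only if m is a monomorphism and every epimorphism e of V is V-orthogonal to m. -/
open CategoryTheory

/-- `e` is `V`-orthogonal to `m` when the internal-hom square of `(e, m)` is a
pullback in `V`. -/
def VOrthogonal {V : Type*} [Category V] [MonoidalCategory V] [SymmetricCategory V]
    [MonoidalClosed V] {A₁ A₂ B₁ B₂ : V} (e : A₁ ⟶ A₂) (m : B₁ ⟶ B₂) : Prop :=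
  IsPullback ((MonoidalClosed.pre e).app B₁) ((ihom A₂).map m)
    ((ihom A₁).map m) ((MonoidalClosed.pre e).app B₂)

/-!
Currying identifies maps `X ⟶ [A, B]` with maps `A ⊗ X ⟶ B`. Under this identification, cones
with vertex `X` over the cospan of the internal-hom square of `(e, m)` are commutative squares
from `e ▷ X` to `m`, and factorisations of such a cone through `[A₂, B₁]` are diagonal fillers.
Since `- ⊗ X` preserves epimorphisms, a strong monomorphism provides the fillers, and the
factorisation is unique because `[A₂, -]` preserves monomorphisms. Conversely, taking `X` to be
the unit object recovers the lifting property against `e` itself.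
-/

open MonoidalCategory MonoidalClosed Limits

section

variable {V : Type*} [Category V] [MonoidalCategory V]

instance epi_whiskerRight [BraidedCategory V] [MonoidalClosed V] {A₁ A₂ : V} (e : A₁ ⟶ A₂)
    [Epi e] (X : V) : Epi (e ▷ X) := by
  have : Epi (X ◁ e) := (tensorLeft X).map_epi e
  rw [← epi_comp_iff_of_isIso _ (β_ A₂ X).hom, BraidedCategory.braiding_naturality_left]
  infer_instance

lemma commSq_uncurry_whiskerRight [MonoidalClosed V] {A₁ A₂ B₁ B₂ X : V} {e : A₁ ⟶ A₂}
    {m : B₁ ⟶ B₂} {f : X ⟶ (ihom A₁).obj B₁} {g : X ⟶ (ihom A₂).obj B₂}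
    (w : f ≫ (ihom A₁).map m = g ≫ (pre e).app B₂) :
    CommSq (uncurry f) (e ▷ X) m (uncurry g) :=
  ⟨by rw [← uncurry_natural_right, w, uncurry_pre_app]⟩

variable [SymmetricCategory V] [MonoidalClosed V] {A₁ A₂ B₁ B₂ : V} {e : A₁ ⟶ A₂}
  {m : B₁ ⟶ B₂}

lemma VOrthogonal.hasLiftingProperty_whiskerRight (h : VOrthogonal e m) (X : V) :
    HasLiftingProperty (e ▷ X) m where
  sq_hasLift {u v} sq := by
    have w : curry u ≫ (ihom A₁).map m = curry v ≫ (pre e).app B₂ := by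
      apply uncurry_injective
      rw [uncurry_natural_right, uncurry_pre_app, uncurry_curry, uncurry_curry, sq.w]
    refine ⟨⟨⟨uncurry (h.lift _ _ w), ?_, ?_⟩⟩⟩
    · rw [← uncurry_pre_app, h.lift_fst, uncurry_curry]
    · rw [← uncurry_natural_right, h.lift_snd, uncurry_curry]

lemma VOrthogonal.hasLiftingProperty (h : VOrthogonal e m) : HasLiftingProperty e m :=
  have := h.hasLiftingProperty_whiskerRight (𝟙_ V)
  HasLiftingProperty.of_arrow_iso_left
    (Arrow.isoMk (f := Arrow.mk (e ▷ 𝟙_ V)) (ρ_ A₁) (ρ_ A₂) (rightUnitor_naturality e).symm) m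

lemma VOrthogonal.of_hasLiftingProperty_whiskerRight [Mono m]
    (h : ∀ X : V, HasLiftingProperty (e ▷ X) m) : VOrthogonal e m := by
  let lift (s : PullbackCone ((ihom A₁).map m) ((pre e).app B₂)) :=
    curry (commSq_uncurry_whiskerRight s.condition).lift
  have lift_fst (s) : lift s ≫ (pre e).app B₁ = s.fst := by
    apply uncurry_injective
    rw [uncurry_pre_app, uncurry_curry]
    exact (commSq_uncurry_whiskerRight s.condition).fac_left
  have lift_snd (s) : lift s ≫ (ihom A₂).map m = s.snd := by
    apply uncurry_injective
    rw [uncurry_natural_right, uncurry_curry]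
    exact (commSq_uncurry_whiskerRight s.condition).fac_right
  refine IsPullback.of_isLimit (PullbackCone.IsLimit.mk (pre_comm_ihom_map e m)
    lift lift_fst lift_snd fun s l _ hl => ?_)
  rw [← cancel_mono ((ihom A₂).map m), hl, lift_snd]

end

/-- In a symmetric monoidal closed category, a morphism `m` is a strong monomorphism
iff it is a monomorphism and every epimorphism is `V`-orthogonal to `m`. -/
theorem stmt_5 {V : Type*} [Category V] [MonoidalCategory V] [SymmetricCategory V]
    [MonoidalClosed V] {B₁ B₂ : V} (m : B₁ ⟶ B₂) :
    StrongMono m ↔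
      (Mono m ∧ ∀ {A₁ A₂ : V} (e : A₁ ⟶ A₂), Epi e → VOrthogonal e m) := by
  constructor
  · intro _
    exact ⟨inferInstance, fun e _ =>
      VOrthogonal.of_hasLiftingProperty_whiskerRight fun _ => inferInstance⟩
  · rintro ⟨hm, horth⟩
    exact ⟨hm, fun _ _ e he => (horth e he).hasLiftingProperty⟩
end

section
/- Let V be a symmetric monoidal closed category and let E be a class of morphisms of V such that for every object V₀ of V and every e ∈ E, the whiskering V₀ ◁ e (i.e. id_{V₀} ⊗ e) again belongs to E. Then for every morphism m of V, the following are equivalent: (a) every member of E is V-orthogonal to m; (b) every member of E is ordinarily orthogonal to m. -/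
open CategoryTheory MonoidalCategory

/-- `e` is ordinarily orthogonal to `m`: every commutative square from `e` to `m`
admits a unique diagonal filler. -/
def OrdOrthogonal {C : Type*} [Category C]
    {A₁ A₂ B₁ B₂ : C} (e : A₁ ⟶ A₂) (m : B₁ ⟶ B₂) : Prop :=
  ∀ (u : A₁ ⟶ B₁) (v : A₂ ⟶ B₂), u ≫ m = e ≫ v →
    ∃! d : A₂ ⟶ B₁, e ≫ d = u ∧ d ≫ m = v

/-!
Currying identifies maps `T ⟶ [A, B]` with maps `A ⊗ T ⟶ B`; it turns commutative squares
from `T` into the internal-hom square of `(e, m)` into commutative squares from `e ▷ T` to `m`,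
and factorisations through the corner `[A₂, B₁]` into diagonal fillers. Hence `e` is
`V`-orthogonal to `m` iff every `e ▷ T` is orthogonal to `m`. Taking `T = 𝟙_ V` gives (a) ⇒ (b);
conversely the braiding identifies `e ▷ T` with `T ◁ e`, which lies in `E`.
-/

namespace CategoryTheory

lemma IsPullback.iff_existsUnique_lift {C : Type*} [Category C] {P X Y Z : C}
    {fst : P ⟶ X} {snd : P ⟶ Y} {f : X ⟶ Z} {g : Y ⟶ Z} (w : fst ≫ f = snd ≫ g) :
    IsPullback fst snd f g ↔ ∀ (T : C) (h : T ⟶ X) (k : T ⟶ Y), h ≫ f = k ≫ g →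
      ∃! l : T ⟶ P, l ≫ fst = h ∧ l ≫ snd = k := by
  constructor
  · intro hP T h k hw
    exact ⟨hP.lift h k hw, ⟨hP.lift_fst h k hw, hP.lift_snd h k hw⟩,
      fun l ⟨hl₁, hl₂⟩ => hP.hom_ext (by simpa using hl₁) (by simpa using hl₂)⟩
  · intro hlift
    choose lift lift_spec lift_uniq using fun s : Limits.PullbackCone f g =>
      hlift s.pt s.fst s.snd s.condition
    exact IsPullback.of_isLimit (c := Limits.PullbackCone.mk _ _ w) <|
      Limits.PullbackCone.IsLimit.mk w lift (fun s => (lift_spec s).1) (fun s => (lift_spec s).2)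
        (fun s l h₁ h₂ => lift_uniq s l ⟨h₁, h₂⟩)

end CategoryTheory

namespace OrdOrthogonal

variable {C : Type*} [Category C]

lemma of_arrowIso {A₁ A₂ A₁' A₂' B₁ B₂ : C} {e : A₁ ⟶ A₂} {e' : A₁' ⟶ A₂'} {m : B₁ ⟶ B₂}
    (φ : Arrow.mk e ≅ Arrow.mk e') (h : OrdOrthogonal e m) : OrdOrthogonal e' m := by
  have hφ : φ.hom.left ≫ e' = e ≫ φ.hom.right := φ.hom.w
  have hφ' : φ.inv.left ≫ e = e' ≫ φ.inv.right := φ.inv.w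
  intro u v huv
  obtain ⟨d, ⟨hd₁, hd₂⟩, hd⟩ := h (φ.hom.left ≫ u) (φ.hom.right ≫ v) (by
    rw [Category.assoc, huv, ← Category.assoc, hφ, Category.assoc])
  refine ⟨φ.inv.right ≫ d, ⟨?_, by simp [hd₂]⟩, fun d' ⟨hd'₁, hd'₂⟩ => ?_⟩
  · rw [← Category.assoc, ← hφ', Category.assoc, hd₁]
    simp
  · have : φ.hom.right ≫ d' = d := hd _ ⟨by rw [← Category.assoc, ← hφ, Category.assoc, hd'₁],
      by simp [hd'₂]⟩
    simp [← this]

end OrdOrthogonal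

section Closed

variable {V : Type*} [Category V] [MonoidalCategory V] [SymmetricCategory V] [MonoidalClosed V]

open MonoidalClosed

lemma vOrthogonal_iff_forall_ordOrthogonal_whiskerRight {A₁ A₂ B₁ B₂ : V}
    (e : A₁ ⟶ A₂) (m : B₁ ⟶ B₂) :
    VOrthogonal e m ↔ ∀ T : V, OrdOrthogonal (e ▷ T) m := by
  rw [VOrthogonal, IsPullback.iff_existsUnique_lift ((pre e).naturality m).symm]
  refine forall_congr' fun T => ?_
  refine ((ihom.adjunction A₁).homEquiv T B₁).symm.forall_congr fun h => ?_
  refine ((ihom.adjunction A₂).homEquiv T B₂).symm.forall_congr fun k => ?_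
  simp only [homEquiv_symm_apply_eq]
  refine imp_congr ?_ (((ihom.adjunction A₂).homEquiv T B₁).symm.existsUnique_congr fun l => ?_)
  · rw [← uncurry_natural_right, ← uncurry_pre_app, uncurry_injective.eq_iff]
  · simp only [homEquiv_symm_apply_eq]
    rw [← uncurry_natural_right, ← uncurry_pre_app, uncurry_injective.eq_iff,
      uncurry_injective.eq_iff]

end Closed

/-- If a class `E` of morphisms of a symmetric monoidal closed category `V` is stable
under whiskering on the left by objects of `V`, then for every morphism `m`,
`V`-orthogonality of every member of `E` to `m` is equivalent to ordinary orthogonality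
of every member of `E` to `m`. -/
theorem stmt_6 {V : Type*} [Category V] [MonoidalCategory V] [SymmetricCategory V]
    [MonoidalClosed V] (E : MorphismProperty V)
    (hE : ∀ (V₀ : V) {A₁ A₂ : V} (e : A₁ ⟶ A₂), E e → E (V₀ ◁ e))
    {B₁ B₂ : V} (m : B₁ ⟶ B₂) :
    (∀ {A₁ A₂ : V} (e : A₁ ⟶ A₂), E e → VOrthogonal e m) ↔
    (∀ {A₁ A₂ : V} (e : A₁ ⟶ A₂), E e → OrdOrthogonal e m) := by
  constructor
  · intro hV A₁ A₂ e he
    exact ((vOrthogonal_iff_forall_ordOrthogonal_whiskerRight e m).1 (hV e he) (𝟙_ V)).of_arrowIso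
      (Arrow.isoMk (ρ_ A₁) (ρ_ A₂))
  · intro hO A₁ A₂ e he
    exact (vOrthogonal_iff_forall_ordOrthogonal_whiskerRight e m).2 fun T =>
      (hO _ (hE T e he)).of_arrowIso (Arrow.isoMk (β_ T A₁) (β_ T A₂))
end

section
/- Let V be a monoidal category, C a category with an enriched ordinary category structure over V, and E, M classes of morphisms of C such that: (i) E and M are each closed under composition and contain all isomorphisms; (ii) every member of E is V-orthogonal to every member of M; (iii) every morphism of C factors as a member of E followed by a member of M. Then M is exactly the class of morphisms of C that are V-orthogonal on the right to every member of E, and E is exactly the class of morphisms of C that are V-orthogonal on the left to every member of M; that is, (E,M) is a V-factorization system on C. -/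
open CategoryTheory

/-!
Evaluating the eHom-square of `(e, m)` at the unit `𝟙_ V` recovers the ordinary square of
hom-sets, so `V`-orthogonality yields unique diagonal fillers. Given `m = e ≫ m'` with
`e ∈ E`, `m' ∈ M` and `e ⊥ m`, a filler of the square `(𝟙, m')` against `m` is a retraction
of `e`, and uniqueness of fillers against `m'` makes it a two-sided inverse; hence `m` is an
isomorphism followed by a member of `M`. The statement for `E` is dual.
-/

/-- `e` is `V`-orthogonal to `m` when the eHom-square of `(e, m)` is a pullback in `V`. -/
def EHomOrthogonal (V : Type*) [Category V] [MonoidalCategory V]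
    {C : Type*} [Category C] [EnrichedOrdinaryCategory V C]
    {A₁ A₂ B₁ B₂ : C} (e : A₁ ⟶ A₂) (m : B₁ ⟶ B₂) : Prop :=
  IsPullback (eHomWhiskerRight V e B₁) (eHomWhiskerLeft V A₂ m)
    (eHomWhiskerLeft V A₁ m) (eHomWhiskerRight V e B₂)

namespace CategoryTheory

open MonoidalCategory Category

variable (V : Type*) [Category V] [MonoidalCategory V]
    {C : Type*} [Category C] [EnrichedOrdinaryCategory V C]

lemma eHomEquiv_comp_eq_comp_eHomWhiskerLeft {X Y Z : C} (f : X ⟶ Y) (g : Y ⟶ Z) :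
    eHomEquiv V (f ≫ g) = eHomEquiv V f ≫ eHomWhiskerLeft V X g := by
  dsimp [eHomWhiskerLeft]
  rw [eHomEquiv_comp, MonoidalCategory.tensorHom_def, unitors_inv_equal, assoc,
    ← rightUnitor_inv_naturality_assoc]

lemma eHomEquiv_comp_eq_comp_eHomWhiskerRight {X Y Z : C} (f : X ⟶ Y) (g : Y ⟶ Z) :
    eHomEquiv V (f ≫ g) = eHomEquiv V g ≫ eHomWhiskerRight V f Z := by
  dsimp [eHomWhiskerRight]
  rw [eHomEquiv_comp, tensorHom_def', assoc, ← leftUnitor_inv_naturality_assoc]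

variable {V}

namespace EHomOrthogonal

variable {A₁ A₂ B₁ B₂ : C} {e : A₁ ⟶ A₂} {m : B₁ ⟶ B₂}

lemma exists_lift (h : EHomOrthogonal V e m) (u : A₁ ⟶ B₁) (v : A₂ ⟶ B₂)
    (w : e ≫ v = u ≫ m) : ∃ d : A₂ ⟶ B₁, e ≫ d = u ∧ d ≫ m = v := by
  have hw : eHomEquiv V u ≫ eHomWhiskerLeft V A₁ m =
      eHomEquiv V v ≫ eHomWhiskerRight V e B₂ := by
    rw [← eHomEquiv_comp_eq_comp_eHomWhiskerLeft, ← eHomEquiv_comp_eq_comp_eHomWhiskerRight, w]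
  refine ⟨(eHomEquiv V).symm (h.lift _ _ hw), ?_, ?_⟩ <;> apply (eHomEquiv V).injective
  · rw [eHomEquiv_comp_eq_comp_eHomWhiskerRight, Equiv.apply_symm_apply, h.lift_fst]
  · rw [eHomEquiv_comp_eq_comp_eHomWhiskerLeft, Equiv.apply_symm_apply, h.lift_snd]

lemma hom_ext (h : EHomOrthogonal V e m) {d₁ d₂ : A₂ ⟶ B₁}
    (h₁ : e ≫ d₁ = e ≫ d₂) (h₂ : d₁ ≫ m = d₂ ≫ m) : d₁ = d₂ := by
  apply (eHomEquiv V).injective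
  apply h.hom_ext
  · simpa only [← eHomEquiv_comp_eq_comp_eHomWhiskerRight] using congrArg (eHomEquiv V) h₁
  · simpa only [← eHomEquiv_comp_eq_comp_eHomWhiskerLeft] using congrArg (eHomEquiv V) h₂

end EHomOrthogonal

lemma isIso_of_eHomOrthogonal_fac_left {X Y Z : C} {e : X ⟶ Z} {m' : Z ⟶ Y} {m : X ⟶ Y}
    (fac : e ≫ m' = m) (h : EHomOrthogonal V e m) (h' : EHomOrthogonal V e m') : IsIso e := by
  obtain ⟨d, hed, hdm⟩ := h.exists_lift (𝟙 X) m' (by rw [fac, id_comp])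
  refine ⟨d, hed, h'.hom_ext ?_ ?_⟩
  · rw [reassoc_of% hed, comp_id]
  · rw [assoc, fac, hdm, id_comp]

lemma isIso_of_eHomOrthogonal_fac_right {X Y Z : C} {e' : X ⟶ Z} {m : Z ⟶ Y} {e : X ⟶ Y}
    (fac : e' ≫ m = e) (h : EHomOrthogonal V e m) (h' : EHomOrthogonal V e' m) : IsIso m := by
  obtain ⟨d, hed, hdm⟩ := h.exists_lift e' (𝟙 Y) (by rw [fac, comp_id])
  refine ⟨d, h'.hom_ext ?_ ?_, hdm⟩
  · rw [reassoc_of% fac, hed, comp_id]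
  · rw [assoc, hdm, comp_id, id_comp]

end CategoryTheory

/-- If `E` and `M` are closed under composition and contain all isomorphisms, every member
of `E` is `V`-orthogonal to every member of `M`, and `(E, M)`-factorizations exist, then
`(E, M)` is a `V`-factorization system: `M` consists exactly of the morphisms
`V`-orthogonal on the right to all of `E`, and `E` consists exactly of the morphisms
`V`-orthogonal on the left to all of `M`. -/
theorem stmt_8 (V : Type*) [Category V] [MonoidalCategory V]
    {C : Type*} [Category C] [EnrichedOrdinaryCategory V C]
    (E M : MorphismProperty C)
    (hE_iso : ∀ {X Y : C} (f : X ⟶ Y), IsIso f → E f)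
    (hE_comp : ∀ {X Y Z : C} (f : X ⟶ Y) (g : Y ⟶ Z), E f → E g → E (f ≫ g))
    (hM_iso : ∀ {X Y : C} (f : X ⟶ Y), IsIso f → M f)
    (hM_comp : ∀ {X Y Z : C} (f : X ⟶ Y) (g : Y ⟶ Z), M f → M g → M (f ≫ g))
    (horth : ∀ {A₁ A₂ B₁ B₂ : C} (e : A₁ ⟶ A₂) (m : B₁ ⟶ B₂),
      E e → M m → EHomOrthogonal V e m)
    (hfact : ∀ {X Y : C} (f : X ⟶ Y),
      ∃ (Z : C) (e : X ⟶ Z) (m : Z ⟶ Y), E e ∧ M m ∧ e ≫ m = f) :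
    (∀ {B₁ B₂ : C} (m : B₁ ⟶ B₂),
      M m ↔ ∀ {A₁ A₂ : C} (e : A₁ ⟶ A₂), E e → EHomOrthogonal V e m) ∧
    (∀ {A₁ A₂ : C} (e : A₁ ⟶ A₂),
      E e ↔ ∀ {B₁ B₂ : C} (m : B₁ ⟶ B₂), M m → EHomOrthogonal V e m) := by
  constructor
  · refine fun m => ⟨fun hm _ _ e he => horth e m he hm, fun h => ?_⟩
    obtain ⟨_, e, m', he, hm', fac⟩ := hfact m
    have : IsIso e := isIso_of_eHomOrthogonal_fac_left fac (h e he) (horth e m' he hm')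
    exact fac ▸ hM_comp e m' (hM_iso e this) hm'
  · refine fun e => ⟨fun he _ _ m hm => horth e m he hm, fun h => ?_⟩
    obtain ⟨_, e', m, he', hm, fac⟩ := hfact e
    have : IsIso m := isIso_of_eHomOrthogonal_fac_right fac (h m hm) (horth e' m he' hm)
    exact fac ▸ hE_comp e' m he' (hE_iso m this)
end
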